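/- Best-arm identification fails on a random instance: There exists an absolute constant c > 0 with the following property. For every number of arms K ≥ 2, every ε ∈ (0, 1/2), every time horizon T ≤ cK/ε², and every randomized bandit algorithm with prediction (a probability distribution over deterministic bandit algorithms with prediction), if an arm a is drawn uniformly at random from [K] and the algorithm is run on problem instance I_a(ε), then the probability that the algorithm's prediction differs from a is at least 1/12, where the probability is over the choice of a, the rewards, and the algorithm's randomization. -/

import Mathlib

/-!
Compare each instance `I_a(ε)` with the null instance in which every arm has mean `1/2`. By the
chain rule, the KL divergence from the null reward distribution to that of `I_a(ε)` is
`kl(1/2, (1+ε)/2)` times the expected number of pulls of arm `a` under the null instance; these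
expectations add up to `T`, so the `K` divergences add up to `T·kl ≤ (2/3)Tε²`. A weak Pinsker
inequality bounds the probability of predicting `a` under `I_a(ε)` by its null probability plus
`2√KL_a`. The null probabilities of the `K` predictions sum to `1`, and by Cauchy–Schwarz the
square roots sum to at most `√(K·T·kl) ≤ K/8`. So a deterministic algorithm is right on average
with probability at most `(1 + K/4)/K ≤ 3/4`, and a randomized one is a mixture of deterministic ones.
-/

/-- The probability that a deterministic bandit algorithm `A` (with 0/1 rewards and `K` arms),
run on the mean-reward vector `μ`, observes the reward sequence `r : Fin T → Bool`:
conditionally on the first `t-1` rewards, the reward in round `t` equals `1` with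
probability `μ a_t`, where `a_t = A t (prefix of r)`. -/
noncomputable def seqProb {K T : ℕ} (A : (t : Fin T) → (Fin t.1 → Bool) → Fin K)
    (μ : Fin K → ℝ) (r : Fin T → Bool) : ℝ :=
  ∏ t : Fin T,
    if r t then μ (A t fun s => r ⟨s.1, s.2.trans t.2⟩)
    else 1 - μ (A t fun s => r ⟨s.1, s.2.trans t.2⟩)

/-- Problem instance `I_j(ε)`: arm `j` has mean reward `(1+ε)/2`, all other arms `1/2`. -/
noncomputable def instMu (K : ℕ) (j : Fin K) (ε : ℝ) : Fin K → ℝ :=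
  fun i => if i = j then (1 + ε) / 2 else 1 / 2

/-- A deterministic bandit algorithm with prediction: the arm-selection functions,
together with the final prediction `y : {0,1}^T → [K]`. -/
abbrev DetAlgPred (K T : ℕ) :=
  ((t : Fin T) → (Fin t.1 → Bool) → Fin K) × ((Fin T → Bool) → Fin K)

namespace BanditLB
open Finset Real

section DiscreteDivergence

variable {ι : Type*} [Fintype ι] {p q : ι → ℝ}

noncomputable def discreteKL (p q : ι → ℝ) : ℝ := ∑ x, p x * log (p x / q x)

noncomputable def bhattacharyya (p q : ι → ℝ) : ℝ := ∑ x, √(p x) * √(q x)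

lemma sub_sqrt_mul_sqrt_le_mul_log_div {a b : ℝ} (ha : 0 ≤ a) (hb : 0 < b) :
    a - √a * √b ≤ a * log (a / b) / 2 := by
  rcases ha.eq_or_lt with rfl | ha
  · simp
  have hlog : log (√b / √a) = -(log (a / b) / 2) := by
    rw [← sqrt_div hb.le, log_sqrt (by positivity), ← inv_div a b, log_inv]
    ring
  have hmul : a * (√b / √a) = √a * √b := by
    field_simp
    rw [sq_sqrt ha.le]
  have := mul_le_mul_of_nonneg_left (log_le_sub_one_of_pos (by positivity : 0 < √b / √a)) ha.le
  rw [hlog, mul_sub, hmul] at this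
  linarith

lemma bhattacharyya_le_one (hp : ∀ x, 0 ≤ p x) (hq : ∀ x, 0 ≤ q x)
    (hp1 : ∑ x, p x = 1) (hq1 : ∑ x, q x = 1) : bhattacharyya p q ≤ 1 := by
  unfold bhattacharyya
  simpa [hp1, hq1] using Real.sum_sqrt_mul_sqrt_le univ hp hq

lemma two_mul_one_sub_bhattacharyya_le_discreteKL (hp : ∀ x, 0 ≤ p x) (hq : ∀ x, 0 < q x)
    (hp1 : ∑ x, p x = 1) : 2 * (1 - bhattacharyya p q) ≤ discreteKL p q := by
  have := sum_le_sum fun x (_ : x ∈ univ) => sub_sqrt_mul_sqrt_le_mul_log_div (hp x) (hq x)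
  rw [sum_sub_distrib, hp1, ← sum_div] at this
  unfold bhattacharyya discreteKL
  linarith

lemma discreteKL_nonneg (hp : ∀ x, 0 ≤ p x) (hq : ∀ x, 0 < q x)
    (hp1 : ∑ x, p x = 1) (hq1 : ∑ x, q x = 1) : 0 ≤ discreteKL p q := by
  linarith [two_mul_one_sub_bhattacharyya_le_discreteKL hp hq hp1,
    bhattacharyya_le_one hp (fun x => (hq x).le) hp1 hq1]

/-- A weak Pinsker inequality, through the Hellinger distance
`∑ (√p - √q)² = 2 (1 - bhattacharyya p q)`. -/
lemma sum_abs_sub_le_two_sqrt_discreteKL (hp : ∀ x, 0 ≤ p x) (hq : ∀ x, 0 < q x)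
    (hp1 : ∑ x, p x = 1) (hq1 : ∑ x, q x = 1) :
    ∑ x, |p x - q x| ≤ 2 * √(discreteKL p q) := by
  set B := bhattacharyya p q
  have hB := bhattacharyya_le_one hp (fun x => (hq x).le) hp1 hq1
  have hKL := two_mul_one_sub_bhattacharyya_le_discreteKL hp hq hp1
  have hsq : ∀ x, √(p x) ^ 2 = p x ∧ √(q x) ^ 2 = q x :=
    fun x => ⟨sq_sqrt (hp x), sq_sqrt (hq x).le⟩
  have hfactor : ∀ x, |p x - q x| = |√(p x) - √(q x)| * (√(p x) + √(q x)) := by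
    intro x
    rw [← abs_of_nonneg (by positivity : 0 ≤ √(p x) + √(q x)), ← abs_mul]
    congr 1
    nlinarith [hsq x]
  have hminus : ∑ x, |√(p x) - √(q x)| ^ 2 = 2 * (1 - B) := by
    have : ∀ x, |√(p x) - √(q x)| ^ 2 = p x + q x - 2 * (√(p x) * √(q x)) := by
      intro x; rw [sq_abs]; nlinarith [hsq x]
    simp only [this, sum_sub_distrib, sum_add_distrib, ← mul_sum, hp1, hq1, B, bhattacharyya]
    ring
  have hplus : ∑ x, (√(p x) + √(q x)) ^ 2 ≤ 2 ^ 2 := by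
    have : ∀ x, (√(p x) + √(q x)) ^ 2 = p x + q x + 2 * (√(p x) * √(q x)) := by
      intro x; nlinarith [hsq x]
    simp only [this, sum_add_distrib, ← mul_sum, hp1, hq1]
    change 1 + 1 + 2 * B ≤ 2 ^ 2
    linarith
  calc ∑ x, |p x - q x|
      = ∑ x, |√(p x) - √(q x)| * (√(p x) + √(q x)) := sum_congr rfl fun x _ => hfactor x
    _ ≤ √(∑ x, |√(p x) - √(q x)| ^ 2) * √(∑ x, (√(p x) + √(q x)) ^ 2) :=
        Real.sum_mul_le_sqrt_mul_sqrt _ _ _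
    _ ≤ √(discreteKL p q) * 2 := by
        gcongr
        · rw [hminus]; exact hKL
        · exact (sqrt_le_left (by norm_num)).mpr hplus
    _ = 2 * √(discreteKL p q) := mul_comm _ _

lemma sum_sub_sum_le_two_sqrt_discreteKL (hp : ∀ x, 0 ≤ p x) (hq : ∀ x, 0 < q x)
    (hp1 : ∑ x, p x = 1) (hq1 : ∑ x, q x = 1) (E : Finset ι) :
    ∑ x ∈ E, q x - ∑ x ∈ E, p x ≤ 2 * √(discreteKL p q) :=
  calc ∑ x ∈ E, q x - ∑ x ∈ E, p x
      ≤ ∑ x ∈ E, |p x - q x| := by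
        rw [← sum_sub_distrib]
        exact sum_le_sum fun x _ => abs_sub_comm (p x) (q x) ▸ le_abs_self _
    _ ≤ ∑ x, |p x - q x| := sum_le_univ_sum_of_nonneg fun x => abs_nonneg _
    _ ≤ 2 * √(discreteKL p q) := sum_abs_sub_le_two_sqrt_discreteKL hp hq hp1 hq1

end DiscreteDivergence

section RewardSequences

variable {K : ℕ}

/-- `seqProb A μ r` is definitionally `∏ t, bern (μ aₜ) (r t)`. -/
noncomputable def bern (m : ℝ) : Bool → ℝ := fun b => if b then m else 1 - m

lemma sum_bern (m : ℝ) : ∑ b, bern m b = 1 := by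
  simp [bern]

lemma bern_pos {m : ℝ} (hm : m ∈ Set.Ioo 0 1) (b : Bool) : 0 < bern m b := by
  cases b <;> simp [bern, hm.1, hm.2]

lemma discreteKL_bern_self (m : ℝ) : discreteKL (bern m) (bern m) = 0 := by
  simp [discreteKL, bern]

def initAlg {T : ℕ} (A : (t : Fin (T + 1)) → (Fin t.1 → Bool) → Fin K) :
    (t : Fin T) → (Fin t.1 → Bool) → Fin K :=
  fun t => A t.castSucc

lemma sum_fun_fin_succ {α M : Type*} [Fintype α] [AddCommMonoid M] {T : ℕ}
    (f : (Fin (T + 1) → α) → M) :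
    ∑ r, f r = ∑ r : Fin T → α, ∑ b, f (Fin.snoc r b) := by
  rw [← (Fin.snocEquiv fun _ => α).sum_comp f, Fintype.sum_prod_type, sum_comm]
  rfl

lemma seqProb_snoc {T : ℕ} (A : (t : Fin (T + 1)) → (Fin t.1 → Bool) → Fin K)
    (μ : Fin K → ℝ) (r : Fin T → Bool) (b : Bool) :
    seqProb A μ (Fin.snoc r b) = seqProb (initAlg A) μ r * bern (μ (A (Fin.last T) r)) b := by
  unfold seqProb
  rw [Fin.prod_univ_castSucc]
  congr 1
  · refine prod_congr rfl fun t _ => ?_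
    simp only [initAlg, Fin.val_castSucc]
    have hprefix : (fun s : Fin t.1 => (Fin.snoc r b : Fin (T + 1) → Bool)
        ⟨s.1, s.2.trans t.castSucc.2⟩) = fun s => r ⟨s.1, s.2.trans t.2⟩ :=
      funext fun s => Fin.snoc_castSucc (α := fun _ => Bool) (i := ⟨s.1, s.2.trans t.2⟩) ..
    rw [hprefix, Fin.snoc_castSucc]
  · have hprefix : (fun s : Fin T => (Fin.snoc r b : Fin (T + 1) → Bool)
        ⟨s.1, s.2.trans (Fin.last T).2⟩) = r :=
      funext fun s => Fin.snoc_castSucc (α := fun _ => Bool) (i := s) ..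
    simp only [Fin.val_last, hprefix, Fin.snoc_last, bern]

lemma sum_seqProb {T : ℕ} (A : (t : Fin T) → (Fin t.1 → Bool) → Fin K) (μ : Fin K → ℝ) :
    ∑ r, seqProb A μ r = 1 := by
  induction T with
  | zero => simp [seqProb]
  | succ T ih =>
    simp only [sum_fun_fin_succ, seqProb_snoc, ← mul_sum, sum_bern, mul_one, ih]

lemma seqProb_pos {T : ℕ} (A : (t : Fin T) → (Fin t.1 → Bool) → Fin K) {μ : Fin K → ℝ}
    (hμ : ∀ i, μ i ∈ Set.Ioo 0 1) (r : Fin T → Bool) : 0 < seqProb A μ r :=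
  prod_pos fun t _ => bern_pos (hμ _) (r t)

end RewardSequences

section ChainRule

variable {K : ℕ}

lemma sum_mul_log_mul_div {ι : Type*} [Fintype ι] {a b : ℝ} (ha : 0 < a) (hb : 0 < b)
    {m n : ι → ℝ} (hm : ∀ x, 0 < m x) (hn : ∀ x, 0 < n x) (hm1 : ∑ x, m x = 1) :
    ∑ x, a * m x * log (a * m x / (b * n x)) = a * log (a / b) + a * discreteKL m n := by
  have hsplit : ∀ x, log (a * m x / (b * n x)) = log (a / b) + log (m x / n x) := fun x => by
    rw [mul_div_mul_comm, log_mul (by positivity) (by have := hm x; have := hn x; positivity)]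
  simp only [hsplit, mul_add, sum_add_distrib, discreteKL, mul_sum]
  congr 1
  · rw [← sum_mul, ← mul_sum, hm1, mul_one]
  · exact sum_congr rfl fun x _ => by ring

lemma discreteKL_seqProb_succ {T : ℕ} (A : (t : Fin (T + 1)) → (Fin t.1 → Bool) → Fin K)
    {μ ν : Fin K → ℝ} (hμ : ∀ i, μ i ∈ Set.Ioo 0 1) (hν : ∀ i, ν i ∈ Set.Ioo 0 1) :
    discreteKL (seqProb A μ) (seqProb A ν) =
      discreteKL (seqProb (initAlg A) μ) (seqProb (initAlg A) ν) +
        ∑ r, seqProb (initAlg A) μ r *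
          discreteKL (bern (μ (A (Fin.last T) r))) (bern (ν (A (Fin.last T) r))) := by
  rw [discreteKL, sum_fun_fin_succ, discreteKL, ← sum_add_distrib]
  refine sum_congr rfl fun r _ => ?_
  simp only [seqProb_snoc]
  exact sum_mul_log_mul_div (seqProb_pos _ hμ r) (seqProb_pos _ hν r) (bern_pos (hμ _))
    (bern_pos (hν _)) (sum_bern _)

end ChainRule

section Instances

variable {K : ℕ} {ε : ℝ}

noncomputable def halfMu (K : ℕ) : Fin K → ℝ := fun _ => 1 / 2

lemma halfMu_mem_Ioo (i : Fin K) : halfMu K i ∈ Set.Ioo 0 1 := by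
  norm_num [halfMu]

lemma instMu_mem_Ioo (hε : |ε| < 1) (a i : Fin K) : instMu K a ε i ∈ Set.Ioo 0 1 := by
  obtain ⟨h0, h1⟩ := abs_lt.mp hε
  unfold instMu
  split_ifs <;> constructor <;> linarith

lemma discreteKL_bern_half (hε : |ε| < 1) :
    discreteKL (bern (1 / 2)) (bern ((1 + ε) / 2)) = -log (1 - ε ^ 2) / 2 := by
  obtain ⟨h0, h1⟩ := abs_lt.mp hε
  have hplus : (1 / 2 : ℝ) / ((1 + ε) / 2) = (1 + ε)⁻¹ := by
    field_simp
  have hminus : (1 - 1 / 2 : ℝ) / (1 - (1 + ε) / 2) = (1 - ε)⁻¹ := by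
    rw [show (1 : ℝ) - (1 + ε) / 2 = (1 - ε) / 2 by ring]
    field_simp
    norm_num
  simp only [discreteKL, bern, Fintype.sum_bool, if_true, Bool.false_eq_true, if_false, hplus,
    hminus, log_inv]
  rw [show 1 - ε ^ 2 = (1 + ε) * (1 - ε) by ring, log_mul (by linarith) (by linarith)]
  ring

lemma discreteKL_bern_half_le (hε : |ε| ≤ 1 / 2) :
    discreteKL (bern (1 / 2)) (bern ((1 + ε) / 2)) ≤ 2 / 3 * ε ^ 2 := by
  have hsq : ε ^ 2 ≤ 1 / 4 := by nlinarith [sq_abs ε, abs_nonneg ε]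
  have hpos : 0 < 1 - ε ^ 2 := by linarith
  rw [discreteKL_bern_half (by linarith)]
  have hlog := one_sub_inv_le_log_of_pos hpos
  have hinv : (1 - ε ^ 2)⁻¹ ≤ 1 + 4 / 3 * ε ^ 2 := by
    rw [inv_le_iff_one_le_mul₀ hpos]
    nlinarith
  linarith

lemma sum_discreteKL_seqProb_instMu (hε : |ε| < 1) {T : ℕ}
    (A : (t : Fin T) → (Fin t.1 → Bool) → Fin K) :
    ∑ a, discreteKL (seqProb A (halfMu K)) (seqProb A (instMu K a ε)) =
      T * discreteKL (bern (1 / 2)) (bern ((1 + ε) / 2)) := by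
  induction T with
  | zero => simp [discreteKL, seqProb]
  | succ T ih =>
    have hstep : ∀ a r, discreteKL (bern (halfMu K (A (Fin.last T) r)))
        (bern (instMu K a ε (A (Fin.last T) r))) =
          if A (Fin.last T) r = a then discreteKL (bern (1 / 2)) (bern ((1 + ε) / 2)) else 0 := by
      intro a r
      unfold instMu halfMu
      split_ifs
      · rfl
      · exact discreteKL_bern_self _
    simp only [discreteKL_seqProb_succ A halfMu_mem_Ioo (instMu_mem_Ioo hε _), sum_add_distrib,
      ih, hstep, sum_comm (γ := Fin K), mul_ite, mul_zero, sum_ite_eq, mem_univ, if_true,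
      ← sum_mul, sum_seqProb]
    push_cast
    ring

end Instances

section DeterministicAlgorithms

variable {K T : ℕ} {ε : ℝ}

lemma sum_prob_correct_le (hε : |ε| < 1) (alg : DetAlgPred K T) :
    ∑ a, ∑ r ∈ univ.filter (fun r => alg.2 r = a), seqProb alg.1 (instMu K a ε) r ≤
      1 + 2 * √K * √(T * discreteKL (bern (1 / 2)) (bern ((1 + ε) / 2))) := by
  set P₀ := seqProb alg.1 (halfMu K)
  set P := fun a => seqProb alg.1 (instMu K a ε)
  have hP₀ : ∀ r, 0 ≤ P₀ r := fun r => (seqProb_pos _ halfMu_mem_Ioo r).le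
  have hP : ∀ a r, 0 < P a r := fun a => seqProb_pos _ (instMu_mem_Ioo hε a)
  have hcorrect : ∀ a, ∑ r ∈ univ.filter (fun r => alg.2 r = a), P a r ≤
      ∑ r ∈ univ.filter (fun r => alg.2 r = a), P₀ r + 2 * √(discreteKL P₀ (P a)) :=
    fun a => by
      linarith [sum_sub_sum_le_two_sqrt_discreteKL hP₀ (hP a) (sum_seqProb _ _)
        (sum_seqProb _ _) (univ.filter fun r => alg.2 r = a)]
  have hfiber : ∑ a, ∑ r ∈ univ.filter (fun r => alg.2 r = a), P₀ r = 1 := by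
    rw [sum_fiberwise, sum_seqProb]
  have hcauchySchwarz : ∑ a, √(discreteKL P₀ (P a)) ≤
      √K * √(T * discreteKL (bern (1 / 2)) (bern ((1 + ε) / 2))) := by
    have := Real.sum_sqrt_mul_sqrt_le univ (fun _ => zero_le_one)
      fun a => discreteKL_nonneg hP₀ (hP a) (sum_seqProb _ _) (sum_seqProb _ _)
    rw [← sum_discreteKL_seqProb_instMu hε alg.1]
    simpa only [Real.sqrt_one, one_mul, sum_const, card_univ, Fintype.card_fin, nsmul_eq_mul,
      mul_one] using this
  calc ∑ a, ∑ r ∈ univ.filter (fun r => alg.2 r = a), P a r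
      ≤ ∑ a, (∑ r ∈ univ.filter (fun r => alg.2 r = a), P₀ r + 2 * √(discreteKL P₀ (P a))) :=
        sum_le_sum fun a _ => hcorrect a
    _ ≤ 1 + 2 * √K * √(T * discreteKL (bern (1 / 2)) (bern ((1 + ε) / 2))) := by
        rw [sum_add_distrib, hfiber, ← mul_sum]
        linarith

lemma one_quarter_le_avg_prob_error (hK : 2 ≤ K) (hε : |ε| ≤ 1 / 2)
    (hT : T * ε ^ 2 ≤ 3 / 128 * K) (alg : DetAlgPred K T) :
    1 / 4 ≤ (K : ℝ)⁻¹ * ∑ a, ∑ r ∈ univ.filter (fun r => alg.2 r ≠ a),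
      seqProb alg.1 (instMu K a ε) r := by
  have hK' : (2 : ℝ) ≤ K := by exact_mod_cast hK
  have hcorrect := sum_prob_correct_le (by linarith) alg
  have hkl : T * discreteKL (bern (1 / 2)) (bern ((1 + ε) / 2)) ≤ K / 64 := by
    nlinarith [mul_le_mul_of_nonneg_left (discreteKL_bern_half_le hε) (Nat.cast_nonneg T)]
  have hsqrt : √K * √(T * discreteKL (bern (1 / 2)) (bern ((1 + ε) / 2))) ≤ K / 8 := by
    rw [← sqrt_mul (Nat.cast_nonneg K)]
    calc _ ≤ √((K / 8) ^ 2) := sqrt_le_sqrt (by nlinarith)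
      _ = K / 8 := sqrt_sq (by positivity)
  have herror : ∀ a, ∑ r ∈ univ.filter (fun r => alg.2 r ≠ a), seqProb alg.1 (instMu K a ε) r =
      1 - ∑ r ∈ univ.filter (fun r => alg.2 r = a), seqProb alg.1 (instMu K a ε) r := fun a => by
    rw [← sum_seqProb alg.1 (instMu K a ε), ← sum_filter_add_sum_filter_not univ
      (fun r => alg.2 r = a)]
    ring
  rw [sum_congr rfl fun a _ => herror a, sum_sub_distrib, sum_const, card_univ, Fintype.card_fin,
    nsmul_eq_mul, mul_one, le_inv_mul_iff₀ (by positivity)]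
  linarith

end DeterministicAlgorithms

end BanditLB

/-- **Best-arm identification fails on a random instance.**
There is an absolute constant `c > 0` such that for every `K ≥ 2`, `ε ∈ (0,1/2)`,
time horizon `T ≤ cK/ε²`, and randomized bandit algorithm with prediction
(a distribution `π` over deterministic algorithms with prediction), if an arm `a`
is drawn uniformly from `[K]` and the algorithm is run on instance `I_a(ε)`, then
`Pr[prediction ≠ a] ≥ 1/12` (over the arm, the rewards, and the randomization). -/
theorem randomized_bestarm_lower_bound :
    ∃ c > (0 : ℝ), ∀ (K T : ℕ), 2 ≤ K → ∀ ε : ℝ, 0 < ε → ε < 1 / 2 →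
      (T : ℝ) ≤ c * K / ε ^ 2 →
      ∀ π : DetAlgPred K T → ℝ,
        (∀ alg, 0 ≤ π alg) → (∑ alg, π alg) = 1 →
        (1 / 12 : ℝ) ≤ (K : ℝ)⁻¹ * ∑ a : Fin K, ∑ alg : DetAlgPred K T, π alg *
          ∑ r ∈ Finset.univ.filter (fun r : Fin T → Bool => alg.2 r ≠ a),
            seqProb alg.1 (instMu K a ε) r := by
  refine ⟨3 / 128, by norm_num, fun K T hK ε hε₀ hε hT π hπ₀ hπ₁ => ?_⟩
  have hdet := BanditLB.one_quarter_le_avg_prob_error hK (abs_le.mpr ⟨by linarith, hε.le⟩)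
    ((le_div_iff₀ (by positivity)).mp hT)
  calc (1 / 12 : ℝ) = ∑ alg, π alg * (1 / 12) := by rw [← Finset.sum_mul, hπ₁, one_mul]
    _ ≤ ∑ alg, π alg * ((K : ℝ)⁻¹ * ∑ a, ∑ r ∈ Finset.univ.filter (fun r => alg.2 r ≠ a),
          seqProb alg.1 (instMu K a ε) r) :=
        Finset.sum_le_sum fun alg _ =>
          mul_le_mul_of_nonneg_left ((by norm_num : (1 / 12 : ℝ) ≤ 1 / 4).trans (hdet alg))
            (hπ₀ alg)
    _ = _ := by
        simp only [Finset.mul_sum]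
        rw [Finset.sum_comm]
        exact Finset.sum_congr rfl fun _ _ => Finset.sum_congr rfl fun _ _ =>
          Finset.sum_congr rfl fun _ _ => by ring
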